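/- For every natural number n, the self-membership of the set of all sets of size different from n is independent in BST: letting α_n := ∃y∀x(x∈y ↔ ¬card_n(x)) and σ_n := ∀y(∀x(x∈y ↔ ¬card_n(x)) → y∈y), both BST ∪ {α_n, σ_n} and BST ∪ {α_n, ¬σ_n} are satisfiable. -/

import Mathlib

/-!
Both theories have models on `Fin (n + 1)`. Reading `a` as the von Neumann ordinal
`{0, …, a - 1}` (so that the elements of `a` form `Set.Iio a`), the only set with exactly `n`
elements is `n` itself; the sets of size `≠ n` are then the elements of `n`, so they form the
set `n`, which does not belong to itself. Replacing the top element `n` by a universal set `V`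
leaves no set with exactly `n` elements (`V` has `n + 1`), so `V` is the set of all sets of
size `≠ n` and belongs to itself.
-/

open FirstOrder FirstOrder.Language

namespace SetParadox

/-- The language with a single binary relation symbol `∈`. -/
def L : Language := ⟨fun _ => Empty, fun n => match n with | 2 => Unit | _ => Empty⟩

/-- The membership relation symbol. -/
def memRel : L.Relations 2 := Unit.unit

/-- `memF t₁ t₂` is the atomic formula `t₁ ∈ t₂`. -/
def memF {n : ℕ} (t₁ t₂ : L.Term (Empty ⊕ Fin n)) : L.BoundedFormula Empty n :=
  memRel.boundedFormula₂ t₁ t₂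

/-- Extensionality: `∀y∀z(∀x(x∈y ↔ x∈z) → y=z)`. -/
def extAx : L.Sentence :=
  ∀' ∀' ((∀' (memF (&2) (&0) ⇔ memF (&2) (&1))) ⟹ ((&0) =' (&1)))

/-- Basic set theory: the theory whose only axiom is extensionality. -/
def BST : L.Theory := {extAx}

/-- The UC-instance `∃y∀x(x∈y ↔ φ(x))` determined by a formula `φ` with one free
variable `x` (so that `y` does not occur free in `φ`). -/
def UCinst (φ : L.BoundedFormula Empty 1) : L.Sentence :=
  ∃' ∀' (memF (&1) (&0) ⇔ φ.liftAt 1 0)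

/-- Prefix a formula in context `k + 1` with `k` existential quantifiers,
yielding a formula in context `1`. -/
def exsN : ∀ (k : ℕ), L.BoundedFormula Empty (k + 1) → L.BoundedFormula Empty 1
  | 0, φ => φ
  | k + 1, φ => exsN k (∃' φ)

/-- Finite conjunction of a list of formulas. -/
def conjL {m : ℕ} : List (L.BoundedFormula Empty m) → L.BoundedFormula Empty m
  | [] => ⊤
  | φ :: l => φ ⊓ conjL l

/-- Finite disjunction of a list of formulas. -/
def disjL {m : ℕ} : List (L.BoundedFormula Empty m) → L.BoundedFormula Empty m
  | [] => ⊥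
  | φ :: l => φ ⊔ disjL l

/-- `card_n(y)`: `y` has exactly `n` elements.  For `n = 0` it is `∀x ¬x∈y`; for `n ≥ 1`
it is `∃x₁…∃xₙ(⋀_{i<j} xᵢ≠xⱼ ∧ ⋀_i xᵢ∈y ∧ ∀x(x∈y → ⋁_i x=xᵢ))`.
The free variable `y` is `&0`; the witnesses `xᵢ` are `&(i+1)`. -/
def cardF : ℕ → L.BoundedFormula Empty 1
  | 0 => ∀' ∼(memF (&1) (&0))
  | m + 1 =>
    exsN (m + 1) <|
      conjL (((List.finRange (m + 1)) ×ˢ (List.finRange (m + 1))).filterMap fun p =>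
          if p.1 < p.2 then some (∼((&p.1.succ) =' (&p.2.succ))) else none) ⊓
      conjL ((List.finRange (m + 1)).map fun i => memF (&i.succ) (&(0 : Fin (m + 2)))) ⊓
      (∀' (memF (&(Fin.last (m + 2))) (&(0 : Fin (m + 3))) ⟹
        disjL ((List.finRange (m + 1)).map fun i =>
          (&(Fin.last (m + 2))) =' (&(i.succ.castSucc : Fin (m + 3))))))

/-- `∀y(∀x(x∈y ↔ φ(x)) → y∈y)`: the set defined by `φ` is a member of itself. -/
def selfMemOf (φ : L.BoundedFormula Empty 1) : L.Sentence :=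
  ∀' ((∀' (memF (&1) (&0) ⇔ φ.liftAt 1 0)) ⟹ memF (&0) (&0))

theorem _root_.Set.encard_eq_coe_iff_exists_injective_range {α : Type*} {s : Set α} {k : ℕ} :
    s.encard = k ↔ ∃ w : Fin k → α, Function.Injective w ∧ Set.range w = s := by
  constructor
  · intro hs
    have : Finite s := Set.finite_of_encard_eq_coe hs
    have hcard : Nat.card s = k := by
      rw [Nat.card_coe_set_eq, Set.ncard_def, hs, ENat.toNat_natCast]
    let e := Finite.equivFinOfCardEq hcard
    refine ⟨Subtype.val ∘ e.symm, Subtype.val_injective.comp e.symm.injective, ?_⟩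
    rw [Set.range_comp, e.symm.range_eq_univ, Set.image_univ, Subtype.range_coe]
  · rintro ⟨w, hw, rfl⟩
    rw [← Set.image_univ, hw.encard_image, Set.encard_univ, ENat.card_eq_coe_fintype_card,
      Fintype.card_fin]

theorem _root_.Fin.encard_Iio {k : ℕ} (a : Fin k) : (Set.Iio a).encard = a := by
  rw [← Finset.coe_Iio, Set.encard_coe_eq_coe_finsetCard, Fin.card_Iio]

section Semantics

variable {M : Type*} [L.Structure M]

def members (a : M) : Set M := {b | Structure.RelMap memRel ![b, a]}

@[simp] lemma realize_memF {n : ℕ} {t₁ t₂ : L.Term (Empty ⊕ Fin n)} {v : Empty → M}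
    {xs : Fin n → M} :
    (memF t₁ t₂).Realize v xs ↔
      t₁.realize (Sum.elim v xs) ∈ members (t₂.realize (Sum.elim v xs)) :=
  BoundedFormula.realize_rel₂

lemma realize_conjL {m : ℕ} (l : List (L.BoundedFormula Empty m)) (v : Empty → M)
    (xs : Fin m → M) : (conjL l).Realize v xs ↔ ∀ φ ∈ l, φ.Realize v xs := by
  induction l with
  | nil => simp [conjL]
  | cons φ l ih => simp [conjL, ih]

lemma realize_disjL {m : ℕ} (l : List (L.BoundedFormula Empty m)) (v : Empty → M)
    (xs : Fin m → M) : (disjL l).Realize v xs ↔ ∃ φ ∈ l, φ.Realize v xs := by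
  induction l with
  | nil => simp [disjL]
  | cons φ l ih => simp [disjL, ih]

lemma realize_exsN (k : ℕ) (φ : L.BoundedFormula Empty (k + 1)) (v : Empty → M) (a : M) :
    (exsN k φ).Realize v ![a] ↔ ∃ w : Fin k → M, φ.Realize v (Fin.cons a w) := by
  induction k with
  | zero => exact ⟨fun h => ⟨![], h⟩, fun ⟨w, h⟩ => by rwa [Matrix.empty_eq w] at h⟩
  | succ k ih =>
    simp only [exsN, ih, BoundedFormula.realize_ex, ← Fin.cons_snoc_eq_snoc_cons]
    constructor
    · rintro ⟨w, b, h⟩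
      exact ⟨Fin.snoc w b, h⟩
    · rintro ⟨w, h⟩
      exact ⟨Fin.init w, w (Fin.last k), by rwa [Fin.snoc_init_self]⟩

lemma realize_cardF_succ_iff (m : ℕ) (v : Empty → M) (a : M) :
    (cardF (m + 1)).Realize v ![a] ↔
      ∃ w : Fin (m + 1) → M, Function.Injective w ∧ Set.range w = members a := by
  rw [cardF, realize_exsN]
  refine exists_congr fun w => ?_
  simp only [BoundedFormula.realize_inf, realize_conjL, BoundedFormula.realize_all,
    BoundedFormula.realize_imp, realize_disjL, List.mem_filterMap, List.mem_map,
    List.mem_finRange, true_and, Option.ite_none_right_eq_some, Option.some_inj, realize_memF,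
    BoundedFormula.realize_bdEqual, Term.realize_var, Sum.elim_inr, Fin.snoc_last,
    Fin.snoc_castSucc, Fin.snoc_apply_zero, Fin.cons_zero, Fin.cons_succ, forall_exists_index,
    and_imp, Function.comp_apply, forall_apply_eq_imp_iff, exists_exists_eq_and]
  rw [Function.injective_iff_pairwise_ne, pairwise_iff_lt, Set.Subset.antisymm_iff,
    Set.range_subset_iff, and_assoc]
  refine and_congr ⟨fun h i j hij => ?_, fun h φ x _ hx hφ => ?_⟩ (and_congr Iff.rfl ?_)
  · simpa using h _ (i, j) (by simp) hij rfl
  · simpa [← hφ] using h hx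
  · simp only [Set.subset_def, Set.mem_range, eq_comm]

lemma realize_cardF (k : ℕ) (v : Empty → M) (a : M) :
    (cardF k).Realize v ![a] ↔ (members a).encard = k := by
  cases k with
  | zero =>
    simp [cardF, Set.eq_empty_iff_forall_notMem]
  | succ m =>
    rw [realize_cardF_succ_iff, Set.encard_eq_coe_iff_exists_injective_range]

/- A sentence is evaluated at the valuation `default : Fin 0 → M`; rewriting it to `![]` lets the
`Matrix.Fin.snoc_vecCons` lemmas compute the valuations under the quantifiers. -/
lemma realize_extAx : M ⊨ extAx ↔ Function.Injective (members : M → Set M) := by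
  simp [Matrix.empty_eq (default : Fin 0 → M), extAx, Sentence.Realize, Formula.Realize,
    Function.Injective, Set.ext_iff]

lemma realize_UCinst (φ : L.BoundedFormula Empty 1) :
    M ⊨ UCinst φ ↔ ∃ y : M, members y = {x | φ.Realize default ![x]} := by
  simp [Matrix.empty_eq (default : Fin 0 → M), UCinst, Sentence.Realize, Formula.Realize,
    Set.ext_iff, BoundedFormula.realize_liftAt_one, Function.comp_def,
    ← Matrix.vec_single_eq_const]

lemma realize_selfMemOf (φ : L.BoundedFormula Empty 1) :
    M ⊨ selfMemOf φ ↔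
      ∀ y : M, members y = {x | φ.Realize default ![x]} → y ∈ members y := by
  simp [Matrix.empty_eq (default : Fin 0 → M), selfMemOf, Sentence.Realize, Formula.Realize,
    Set.ext_iff, BoundedFormula.realize_liftAt_one, Function.comp_def,
    ← Matrix.vec_single_eq_const]

lemma setOf_realize_not_cardF (k : ℕ) :
    {x : M | (∼(cardF k)).Realize default ![x]} = {x | (members x).encard ≠ k} := by
  ext x
  simp only [Set.mem_ofPred_eq, BoundedFormula.realize_not, realize_cardF]

lemma model_UCinst_selfMemOf_of_forall_encard_ne {k : ℕ}
    (huniv : ∃ y : M, members y = Set.univ) (hk : ∀ x : M, (members x).encard ≠ k) :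
    M ⊨ ({UCinst (∼(cardF k)), selfMemOf (∼(cardF k))} : L.Theory) := by
  have hall : {x : M | (members x).encard ≠ k} = Set.univ := Set.eq_univ_of_forall hk
  simp only [Theory.model_insert_iff, Theory.model_singleton_iff, realize_UCinst,
    realize_selfMemOf, setOf_realize_not_cardF, hall]
  exact ⟨huniv, fun y hy => hy ▸ Set.mem_univ y⟩

lemma model_UCinst_not_selfMemOf {k : ℕ} {y : M}
    (hy : members y = {x | (members x).encard ≠ k}) (hyy : y ∉ members y) :
    M ⊨ ({UCinst (∼(cardF k)), ∼(selfMemOf (∼(cardF k)))} : L.Theory) := by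
  simp only [Theory.model_insert_iff, Theory.model_singleton_iff, realize_UCinst,
    Sentence.realize_not, realize_selfMemOf, setOf_realize_not_cardF, not_forall]
  exact ⟨⟨y, hy⟩, y, hy, hyy⟩

end Semantics

lemma isSatisfiable_BST_union {M : Type} [L.Structure M] [Nonempty M] {T : L.Theory}
    (hext : Function.Injective (members : M → Set M)) (hT : M ⊨ T) :
    (BST ∪ T).IsSatisfiable := by
  have : M ⊨ BST ∪ T := Theory.model_union_iff.2
    ⟨Theory.model_singleton_iff.2 (realize_extAx.2 hext), hT⟩
  exact Theory.Model.isSatisfiable M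

@[reducible] def ofMembers {M : Type*} (m : M → Set M) : L.Structure M where
  funMap := fun f => Empty.elim f
  RelMap := fun {k} r xs => match k, r with | 2, _ => xs 0 ∈ m (xs 1)

section Models

open Function

variable (n : ℕ)

lemma setOf_encard_Iio_ne_eq_Iio_last :
    {a : Fin (n + 1) | (Set.Iio a).encard ≠ n} = Set.Iio (Fin.last n) := by
  ext a
  simp [Fin.encard_Iio, Fin.lt_last_iff_ne_last, Fin.ext_iff]

lemma last_mem_update_Iio_last_iff (a : Fin (n + 1)) :
    Fin.last n ∈ update Set.Iio (Fin.last n) Set.univ a ↔ a = Fin.last n := by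
  by_cases ha : a = Fin.last n
  · simp [ha]
  · simp [ha, Fin.le_last]

lemma injective_update_Iio_last : Injective (update Set.Iio (Fin.last n) Set.univ) := by
  intro a b h
  have hab : a = Fin.last n ↔ b = Fin.last n :=
    (last_mem_update_Iio_last_iff n a).symm.trans (h ▸ last_mem_update_Iio_last_iff n b)
  by_cases ha : a = Fin.last n
  · rw [ha, hab.1 ha]
  · rw [update_of_ne ha, update_of_ne (mt hab.2 ha)] at h
    exact Set.Iio_injective h

lemma encard_update_Iio_last_ne (a : Fin (n + 1)) :
    (update Set.Iio (Fin.last n) Set.univ a).encard ≠ n := by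
  by_cases ha : a = Fin.last n
  · simp [ha]
  · rw [update_of_ne ha, Fin.encard_Iio]
    exact_mod_cast (Fin.val_lt_last ha).ne

end Models

/-- For every `n`, the self-membership of the set of all sets of size different from `n`
is independent in `BST`: with `α_n := ∃y∀x(x∈y ↔ ¬card_n(x))` and
`σ_n := ∀y(∀x(x∈y ↔ ¬card_n(x)) → y∈y)`, both `BST ∪ {α_n, σ_n}` and
`BST ∪ {α_n, ¬σ_n}` are satisfiable. -/
theorem size_ne_n_selfMem_independent (n : ℕ) :
    (BST ∪ {UCinst (∼(cardF n)), selfMemOf (∼(cardF n))}).IsSatisfiable ∧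
    (BST ∪ {UCinst (∼(cardF n)), ∼(selfMemOf (∼(cardF n)))}).IsSatisfiable := by
  constructor
  · let := ofMembers (Function.update Set.Iio (Fin.last n) Set.univ)
    exact isSatisfiable_BST_union (M := Fin (n + 1)) (injective_update_Iio_last n)
      (model_UCinst_selfMemOf_of_forall_encard_ne ⟨Fin.last n, Function.update_self _ _ Set.Iio⟩
        (encard_update_Iio_last_ne n))
  · let := ofMembers (Set.Iio : Fin (n + 1) → Set (Fin (n + 1)))
    exact isSatisfiable_BST_union (M := Fin (n + 1)) Set.Iio_injective
      (model_UCinst_not_selfMemOf (setOf_encard_Iio_ne_eq_Iio_last n).symm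
        (lt_irrefl (Fin.last n)))

end SetParadox
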